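/- Let E be an exact category and let A and B be full subcategories closed under extensions. Suppose given exact functors p: E → A and q: E → B (for the induced exact structures on A and B) together with natural transformations whose component at each object x forms an exact sequence p(x) ↣ x ↠ q(x), such that the inclusion p(x) ↣ x is the counit of an adjunction between p and the inclusion of A, and the projection x ↠ q(x) is the unit of an adjunction between the inclusion of B and q. Let E(A, E, B) be the category whose objects are exact sequences a ↣ x ↠ b of E with a ∈ A and b ∈ B, and whose morphisms are commutative diagrams of such sequences. Then the functor e: E(A, E, B) → E sending (a ↣ x ↠ b) to x is an equivalence of categories. -/

import Mathlib

/-!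
Basic definitions: exact (∞-)categories à la Barwick (1-categorical formalization).
An exact structure on an additive category consists of two wide subcategories of
"inclusions" and "projections" subject to the axioms below.
-/

open CategoryTheory CategoryTheory.Limits

universe w v u v₂ u₂

namespace ExactPaper

variable {E : Type u} [Category.{v} E]

/-- `ι` is a kernel of `f`. -/
def IsKernelι [Preadditive E] {k x y : E} (ι : k ⟶ x) (f : x ⟶ y) : Prop :=
  ∃ w : ι ≫ f = 0, Nonempty (IsLimit (KernelFork.ofι ι w))

/-- `π` is a cokernel of `f`. -/
def IsCokernelπ [Preadditive E] {x y c : E} (f : x ⟶ y) (π : y ⟶ c) : Prop :=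
  ∃ w : f ≫ π = 0, Nonempty (IsColimit (CokernelCofork.ofπ π w))

/-- An exact structure on an additive category `E`: two wide subcategories of
inclusions (`↣`) and projections (`↠`) satisfying Barwick's axioms.  In the axiom
`exact_square`, the square has top edge `i : x ⟶ y`, left edge `p : x ⟶ x'`,
right edge `q : y ⟶ y'` and bottom edge `j : x' ⟶ y'`. -/
structure ExactStructure (E : Type u) [Category.{v} E] [Preadditive E] where
  /-- the class of inclusions -/
  IsIncl : ∀ ⦃x y : E⦄, (x ⟶ y) → Prop
  /-- the class of projections -/
  IsProj : ∀ ⦃x y : E⦄, (x ⟶ y) → Prop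
  incl_id : ∀ x : E, IsIncl (𝟙 x)
  incl_comp : ∀ {x y z : E} (f : x ⟶ y) (g : y ⟶ z), IsIncl f → IsIncl g → IsIncl (f ≫ g)
  proj_id : ∀ x : E, IsProj (𝟙 x)
  proj_comp : ∀ {x y z : E} (f : x ⟶ y) (g : y ⟶ z), IsProj f → IsProj g → IsProj (f ≫ g)
  incl_from_zero : ∀ {z x : E}, IsZero z → ∀ f : z ⟶ x, IsIncl f
  proj_to_zero : ∀ {x z : E}, IsZero z → ∀ f : x ⟶ z, IsProj f
  /-- pushouts of inclusions along arbitrary morphisms exist -/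
  pushout_incl : ∀ {x y x' : E} (i : x ⟶ y) (f : x ⟶ x'), IsIncl i →
    ∃ (y' : E) (g : y ⟶ y') (j : x' ⟶ y'), IsPushout i f g j
  /-- inclusions are stable under pushout -/
  incl_pushout_stable : ∀ {x y x' y' : E} {i : x ⟶ y} {f : x ⟶ x'} {g : y ⟶ y'} {j : x' ⟶ y'},
    IsPushout i f g j → IsIncl i → IsIncl j
  /-- pullbacks of projections along arbitrary morphisms exist -/
  pullback_proj : ∀ {y z z' : E} (p : y ⟶ z) (f : z' ⟶ z), IsProj p →
    ∃ (y' : E) (g : y' ⟶ y) (q : y' ⟶ z'), IsPullback g q p f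
  /-- projections are stable under pullback -/
  proj_pullback_stable : ∀ {y' z' y z : E} {g : y' ⟶ y} {q : y' ⟶ z'} {p : y ⟶ z} {f : z' ⟶ z},
    IsPullback g q p f → IsProj p → IsProj q
  /-- compatibility: the pushout and pullback descriptions of exact squares agree -/
  exact_square : ∀ {x y x' y' : E} (i : x ⟶ y) (p : x ⟶ x') (q : y ⟶ y') (j : x' ⟶ y'),
    i ≫ q = p ≫ j →
    ((IsIncl i ∧ IsProj p ∧ IsPushout i p q j) ↔ (IsIncl j ∧ IsProj q ∧ IsPullback i p q j))

/-- An exact sequence `x ↣ y ↠ z`: an inclusion which is a kernel of a projection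
which is in turn a cokernel of the inclusion. -/
def IsExactSeq [Preadditive E] (S : ExactStructure E) {x y z : E} (i : x ⟶ y) (p : y ⟶ z) :
    Prop :=
  S.IsIncl i ∧ S.IsProj p ∧ IsKernelι i p ∧ IsCokernelπ i p

end ExactPaper

namespace ExactPaper

variable {E : Type u} [Category.{v} E] [Preadditive E]

/-- The category `E(A, E, B)` of exact sequences `a ↣ x ↠ b` with `a ∈ A` and `b ∈ B`,
realised as the full subcategory of short complexes in `E` whose underlying composable
pair is an exact sequence with outer terms in `A` and `B`: morphisms are commutative
diagrams of such sequences. -/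
def sodSeqProp (S : ExactStructure E) (A B : E → Prop) : ShortComplex E → Prop :=
  fun C => A C.X₁ ∧ B C.X₃ ∧ IsExactSeq S C.f C.g

/-- The functor `e : E(A, E, B) ⥤ E` sending an exact sequence `a ↣ x ↠ b` to its middle
term `x`. -/
def middleTerm (S : ExactStructure E) (A B : E → Prop) :
    ObjectProperty.FullSubcategory (sodSeqProp S A B) ⥤ E :=
  ObjectProperty.ι _ ⋙ ShortComplex.π₂

lemma IsKernelι.mono {k x y : E} {ι : k ⟶ x} {f : x ⟶ y} (h : IsKernelι ι f) : Mono ι :=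
  let ⟨_, ⟨hl⟩⟩ := h
  Fork.IsLimit.mono hl

lemma IsCokernelπ.epi {x y c : E} {f : x ⟶ y} {π : y ⟶ c} (h : IsCokernelπ f π) : Epi π :=
  let ⟨_, ⟨hc⟩⟩ := h
  Cofork.IsColimit.epi hc

lemma IsKernelι.isZero_of_isIso {k x y : E} {ι : k ⟶ x} {f : x ⟶ y}
    (h : IsKernelι ι f) [IsIso f] : IsZero k := by
  have : Mono ι := h.mono
  obtain ⟨w, -⟩ := h
  rw [IsZero.iff_id_eq_zero, ← cancel_mono ι, zero_comp, Category.id_comp,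
    ← cancel_mono f, w, zero_comp]

section middleTerm

variable (S : ExactStructure E) (A B : E → Prop)

instance middleTerm_faithful : (middleTerm S A B).Faithful where
  map_injective {C D} φ ψ (h : φ.hom.τ₂ = ψ.hom.τ₂) := by
    have : Mono D.1.f := D.2.2.2.2.2.1.mono
    have : Epi C.1.g := C.2.2.2.2.2.2.epi
    apply ObjectProperty.hom_ext
    apply ShortComplex.hom_ext
    · rw [← cancel_mono D.1.f, φ.hom.comm₁₂, ψ.hom.comm₁₂, h]
    · exact h
    · rw [← cancel_epi C.1.g, ← φ.hom.comm₂₃, ← ψ.hom.comm₂₃, h]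

/-- A map `x ⟶ y` of middle terms lifts to the outer terms because the composite
`a ↣ x ⟶ y ↠ b` vanishes: `a` is the kernel of `y ↠ b` and `b` the cokernel of `a ↣ x`. -/
lemma middleTerm_full (hAB : ∀ {a b : E}, A a → B b → ∀ f : a ⟶ b, f = 0) :
    (middleTerm S A B).Full where
  map_surjective {C D} (φ : C.1.X₂ ⟶ D.1.X₂) := by
    obtain ⟨hCA, -, -, -, -, ⟨_, ⟨hCc⟩⟩⟩ := C.2
    obtain ⟨-, hDB, -, -, ⟨_, ⟨hDk⟩⟩, -⟩ := D.2
    have hz : C.1.f ≫ φ ≫ D.1.g = 0 := hAB hCA hDB _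
    obtain ⟨τ₁, hτ₁⟩ := KernelFork.IsLimit.lift' hDk (C.1.f ≫ φ) (by rwa [Category.assoc])
    obtain ⟨τ₃, hτ₃⟩ := CokernelCofork.IsColimit.desc' hCc (φ ≫ D.1.g) hz
    exact ⟨ObjectProperty.homMk ⟨τ₁, φ, τ₃, hτ₁, hτ₃.symm⟩, rfl⟩

variable {S A B}
variable {p : E ⥤ ObjectProperty.FullSubcategory A} (adjA : ObjectProperty.ι A ⊣ p)
  {q : E ⥤ ObjectProperty.FullSubcategory B} (adjB : q ⊣ ObjectProperty.ι B)

/-- For `b ∈ B` the projection `b ↠ q(b)` is an isomorphism, so `p(b) = 0`; since `p`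
is right adjoint to a fully faithful inclusion, `f : a ⟶ b` factors through `p(b)`. -/
lemma hom_eq_zero_of_mem_of_mem
    (hker : ∀ x : E, IsKernelι (adjA.counit.app x) (adjB.unit.app x))
    {a b : E} (ha : A a) (hb : B b) (f : a ⟶ b) : f = 0 := by
  have : IsIso (adjB.unit.app b) := adjB.isIso_unit_app_of_iso (X := ⟨b, hb⟩) (Iso.refl _)
  have hpb : IsZero ((p ⋙ ObjectProperty.ι A).obj b) := (hker b).isZero_of_isIso
  have : IsIso (adjA.counit.app a) := adjA.isIso_counit_app_of_iso (Y := ⟨a, ha⟩) (Iso.refl _)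
  have hnat : (p ⋙ ObjectProperty.ι A).map f ≫ adjA.counit.app b = adjA.counit.app a ≫ f :=
    adjA.counit.naturality f
  rw [← cancel_epi (adjA.counit.app a), comp_zero, ← hnat,
    hpb.eq_of_tgt ((p ⋙ ObjectProperty.ι A).map f) 0, zero_comp]

lemma middleTerm_essSurj
    (hseq : ∀ x : E, IsExactSeq S (adjA.counit.app x) (adjB.unit.app x)) :
    (middleTerm S A B).EssSurj where
  mem_essImage x :=
    ⟨⟨ShortComplex.mk _ _ (hseq x).2.2.1.1, (p.obj x).2, (q.obj x).2, hseq x⟩, ⟨Iso.refl x⟩⟩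

end middleTerm

theorem middleTerm_isEquivalence_general
    (S : ExactStructure E) (A B : E → Prop)
    (p : E ⥤ ObjectProperty.FullSubcategory A) (adjA : ObjectProperty.ι A ⊣ p)
    (q : E ⥤ ObjectProperty.FullSubcategory B) (adjB : q ⊣ ObjectProperty.ι B)
    (hseq : ∀ x : E, IsExactSeq S (adjA.counit.app x) (adjB.unit.app x)) :
    (middleTerm S A B).IsEquivalence := by
  have := middleTerm_full S A B (hom_eq_zero_of_mem_of_mem adjA adjB (hseq · |>.2.2.1))
  have := middleTerm_essSurj adjA adjB hseq
  exact { }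

/-- Let `E` be an exact category with extension-closed full
subcategories `A` and `B`, together with exact functors `p : E ⥤ A`, `q : E ⥤ B` and a
natural exact sequence `p(x) ↣ x ↠ q(x)` whose inclusion is the counit of an adjunction
`incl ⊣ p` and whose projection is the unit of an adjunction `q ⊣ incl`.  Then the
functor `e : E(A, E, B) ⥤ E`, `(a ↣ x ↠ b) ↦ x`, is an equivalence of categories. -/
theorem middleTerm_isEquivalence
    (S : ExactStructure E) (A B : E → Prop)
    (hA₀ : ∃ z : E, IsZero z ∧ A z)
    (hAext : ∀ {u y w : E} (i : u ⟶ y) (π : y ⟶ w), IsExactSeq S i π → A u → A w → A y)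
    (hB₀ : ∃ z : E, IsZero z ∧ B z)
    (hBext : ∀ {u y w : E} (i : u ⟶ y) (π : y ⟶ w), IsExactSeq S i π → B u → B w → B y)
    (p : E ⥤ ObjectProperty.FullSubcategory A) (adjA : ObjectProperty.ι A ⊣ p)
    (q : E ⥤ ObjectProperty.FullSubcategory B) (adjB : q ⊣ ObjectProperty.ι B)
    (hseq : ∀ x : E, IsExactSeq S (adjA.counit.app x) (adjB.unit.app x))
    (hp_zero : ∀ x : E, IsZero x → IsZero ((p ⋙ ObjectProperty.ι A).obj x))
    (hp_exact : ∀ {x y z : E} (i : x ⟶ y) (π : y ⟶ z), IsExactSeq S i π →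
      IsExactSeq S ((p ⋙ ObjectProperty.ι A).map i)
        ((p ⋙ ObjectProperty.ι A).map π))
    (hq_zero : ∀ x : E, IsZero x → IsZero ((q ⋙ ObjectProperty.ι B).obj x))
    (hq_exact : ∀ {x y z : E} (i : x ⟶ y) (π : y ⟶ z), IsExactSeq S i π →
      IsExactSeq S ((q ⋙ ObjectProperty.ι B).map i)
        ((q ⋙ ObjectProperty.ι B).map π)) :
    (middleTerm S A B).IsEquivalence :=
  middleTerm_isEquivalence_general S A B p adjA q adjB hseq

end ExactPaper
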